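/- arXiv:2403.16342 — 4 statements merged into one kernel-verified Lean document; each statement's English description precedes it below -/
import Mathlib

section
/- If A is an associative F-algebra such that the Jordan algebra A⁺ (same vector space with product x·y = ½(xy+yx)) has no zero divisors, then A has no zero divisors. -/
/-- If `A` is an associative unital `F`-algebra (char F ≠ 2, 3) such that the Jordan
algebra `A⁺` with product `x·y = ½(xy+yx)` has no zero divisors, then `A` has no
zero divisors. -/
theorem Aplus_division_then_A {F A : Type*} [Field F] [Ring A] [Algebra F A]
    (h2 : (2 : F) ≠ 0) (h3 : (3 : F) ≠ 0)
    (hJ : ∀ x y : A, (2 : F)⁻¹ • (x * y + y * x) = 0 → x = 0 ∨ y = 0) :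
    ∀ x y : A, x * y = 0 → x = 0 ∨ y = 0 := by
  intro x y h
  have hsq : (y * x) * (y * x) = 0 := by
    have : (y * x) * (y * x) = y * ((x * y) * x) := by rw [mul_assoc, ← mul_assoc x y x]
    rw [this, h, zero_mul, mul_zero]
  have hyx : y * x = 0 := by
    rcases hJ (y * x) (y * x) (by rw [hsq, add_zero, smul_zero]) with h' | h' <;> exact h'
  rcases hJ x y (by rw [h, hyx, add_zero, smul_zero]) with h' | h'
  · exact Or.inl h'
  · exact Or.inr h'
end

section
/- In the generalized first Tits construction J(A,μ) with μ ∈ A^×, T(x×y) = ½(T(x)T(y) − T(xy)) for all x,y ∈ J(A,μ), where x×y = ½(x♯y). -/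
/-- A separable associative algebra of degree three over `F`:
an associative unital `F`-algebra `A` equipped with a cubic norm `NA`,
directional derivative `Ndir x y = N_A(x;y)` (the coefficient of `Z` in
`N_A(x+Zy)`), trace `TA`, quadratic form `SA`, adjoint `sharp` and bilinear
trace `Tbil`, satisfying the degree-3 identity, the trace-sharp formula and
the trace-product formula. -/
structure DegreeThreeAlg (F A : Type*) [Field F] [Ring A] [Algebra F A] where
  NA : A → F
  Ndir : A → A → F
  TA : A → F
  SA : A → F
  sharp : A → A
  Tbil : A → A → F
  NA_one : NA 1 = 1
  NA_smul : ∀ (c : F) (x : A), NA (c • x) = c ^ 3 * NA x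
  Ndir_expand : ∀ (x y : A) (z : F),
    NA (x + z • y) = NA x + z * Ndir x y + z ^ 2 * Ndir y x + z ^ 3 * NA y
  Ndir_add_right : ∀ x y z : A, Ndir x (y + z) = Ndir x y + Ndir x z
  Ndir_smul_right : ∀ (x : A) (c : F) (y : A), Ndir x (c • y) = c * Ndir x y
  TA_def : ∀ x : A, TA x = Ndir 1 x
  SA_def : ∀ x : A, SA x = Ndir x 1
  sharp_def : ∀ x : A, sharp x = x ^ 2 - TA x • x + SA x • (1 : A)
  Tbil_def : ∀ x y : A,
    Tbil x y = TA x * TA y - (Ndir (1 + y) x - Ndir 1 x - Ndir y x)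
  degree3 : ∀ x : A, x ^ 3 - TA x • x ^ 2 + SA x • x - NA x • (1 : A) = 0
  trace_sharp : ∀ x y : A, Tbil (sharp x) y = Ndir x y
  trace_product : ∀ x y : A, Tbil x y = TA (x * y)

variable {F A : Type*} [Field F] [Ring A] [Algebra F A]

/-- Conjugation `x̄ = ½(T_A(x)·1 − x)` in `A`. -/
noncomputable def bar (D : DegreeThreeAlg F A) (x : A) : A :=
  (2 : F)⁻¹ • (D.TA x • (1 : A) - x)

/-- Linearization of the adjoint in `A`: `x ♯ y = (x+y)^♯ − x^♯ − y^♯`. -/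
noncomputable def sharpBil (D : DegreeThreeAlg F A) (x y : A) : A :=
  D.sharp (x + y) - D.sharp x - D.sharp y

/-- `x × y = ½ (x ♯ y)` in `A`. -/
noncomputable def cross (D : DegreeThreeAlg F A) (x y : A) : A :=
  (2 : F)⁻¹ • sharpBil D x y

/-- Multiplication of the generalized first Tits construction `J(A,μ)` on `A ⊕ A ⊕ A`. -/
noncomputable def Jmul (D : DegreeThreeAlg F A) (μ : Aˣ) (x y : A × A × A) : A × A × A :=
  ((2 : F)⁻¹ • (x.1 * y.1 + y.1 * x.1) + bar D (x.2.1 * y.2.2) + bar D (y.2.1 * x.2.2),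
   bar D x.1 * y.2.1 + bar D y.1 * x.2.1 + (↑μ⁻¹ : A) * cross D x.2.2 y.2.2,
   x.2.2 * bar D y.1 + y.2.2 * bar D x.1 + (↑μ : A) * cross D x.2.1 y.2.1)

/-- Adjoint on `J(A,μ)`. -/
noncomputable def Jsharp (D : DegreeThreeAlg F A) (μ : Aˣ) (x : A × A × A) : A × A × A :=
  (D.sharp x.1 - x.2.1 * x.2.2,
   (↑μ⁻¹ : A) * D.sharp x.2.2 - x.1 * x.2.1,
   (↑μ : A) * D.sharp x.2.1 - x.2.2 * x.1)

/-- Sharp map on `J(A,μ)`: linearization of the adjoint. -/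
noncomputable def JsharpBil (D : DegreeThreeAlg F A) (μ : Aˣ) (x y : A × A × A) : A × A × A :=
  Jsharp D μ (x + y) - Jsharp D μ x - Jsharp D μ y

/-- Generalized trace on `J(A,μ)`. -/
def JT (D : DegreeThreeAlg F A) (x : A × A × A) : F := D.TA x.1

/-- Generalized bilinear trace on `J(A,μ)`. -/
def JTbil (D : DegreeThreeAlg F A) (x y : A × A × A) : F :=
  D.TA (x.1 * y.1) + D.TA (x.2.1 * y.2.2) + D.TA (x.2.2 * y.2.1)

/-- Generalized cubic norm `N : J(A,μ) → A`. -/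
noncomputable def JN (D : DegreeThreeAlg F A) (μ : Aˣ) (x : A × A × A) : A :=
  D.NA x.1 • (1 : A) + D.NA x.2.1 • (↑μ : A) + D.NA x.2.2 • (↑μ⁻¹ : A)
    - D.TA (x.1 * x.2.1 * x.2.2) • (1 : A)

/-- The unit `1 = (1,0,0)` of `J(A,μ)`. -/
def Jone : A × A × A := ((1 : A), (0 : A), (0 : A))

section Aux

variable (D : DegreeThreeAlg F A)

lemma TA_add' (x y : A) : D.TA (x + y) = D.TA x + D.TA y := by
  rw [D.TA_def, D.TA_def, D.TA_def, D.Ndir_add_right]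

lemma TA_smul' (c : F) (x : A) : D.TA (c • x) = c * D.TA x := by
  rw [D.TA_def, D.TA_def, D.Ndir_smul_right]

lemma TA_neg' (x : A) : D.TA (-x) = -D.TA x := by
  have := TA_smul' D (-1 : F) x
  simpa using this

lemma TA_sub' (x y : A) : D.TA (x - y) = D.TA x - D.TA y := by
  rw [sub_eq_add_neg, TA_add' D, TA_neg' D, sub_eq_add_neg]

lemma TA_one' (h2 : (2 : F) ≠ 0) : D.TA 1 = 3 := by
  have h := D.Ndir_expand 1 1 1
  have hl : (1 : A) + (1 : F) • (1 : A) = (2 : F) • (1 : A) := by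
    rw [one_smul, two_smul]
  rw [hl, D.NA_smul, D.NA_one] at h
  rw [D.TA_def]
  have h6 : (2 : F) * D.Ndir 1 1 = 2 * 3 := by linear_combination -h
  exact mul_left_cancel₀ h2 h6

lemma TA_bar' (h2 : (2 : F) ≠ 0) (z : A) : D.TA (bar D z) = D.TA z := by
  rw [bar, TA_smul' D, TA_sub' D, TA_smul' D, TA_one' D h2]
  field_simp
  ring

lemma TA_sharp' (z : A) : D.TA (D.sharp z) = D.SA z := by
  have h1 := D.trace_product (D.sharp z) 1
  have h2 := D.trace_sharp z 1
  rw [mul_one] at h1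
  rw [D.SA_def, ← h2, h1]

lemma TA_sq' (h2 : (2 : F) ≠ 0) (w : A) :
    D.TA (w ^ 2) = D.TA w * D.TA w - 2 * D.SA w := by
  have h := TA_sharp' D w
  rw [D.sharp_def, TA_add' D, TA_sub' D, TA_smul' D, TA_smul' D, TA_one' D h2] at h
  linear_combination h

lemma TA_sharpBil' (h2 : (2 : F) ≠ 0) (x y : A) :
    D.TA (sharpBil D x y) =
      D.TA x * D.TA y - (2 : F)⁻¹ * (D.TA (x * y) + D.TA (y * x)) := by
  have hS : D.TA (sharpBil D x y) = D.SA (x + y) - D.SA x - D.SA y := by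
    rw [sharpBil, TA_sub' D, TA_sub' D, TA_sharp' D, TA_sharp' D, TA_sharp' D]
  have hexp : (x + y) ^ 2 = x ^ 2 + (x * y + y * x) + y ^ 2 := by noncomm_ring
  have h1 := TA_sq' D h2 (x + y)
  rw [hexp, TA_add' D, TA_add' D, TA_add' D, TA_sq' D h2, TA_sq' D h2,
    TA_add' D] at h1
  rw [hS]
  field_simp
  linear_combination h1

end Aux

/-- In `J(A,μ)` with `μ ∈ A^×`: `T(x×y) = ½(T(x)T(y) − T(xy))`, where `x×y = ½(x♯y)`. -/
theorem JT_cross (F A : Type*) [Field F] [Ring A] [Algebra F A]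
    (h2 : (2 : F) ≠ 0) (h3 : (3 : F) ≠ 0) (D : DegreeThreeAlg F A) (μ : Aˣ) :
    ∀ x y : A × A × A,
      JT D ((2 : F)⁻¹ • JsharpBil D μ x y) =
        (2 : F)⁻¹ * (JT D x * JT D y - JT D (Jmul D μ x y)) := by
  intro x y
  obtain ⟨x1, x2, x3⟩ := x
  obtain ⟨y1, y2, y3⟩ := y
  simp only [JT, JsharpBil, Jsharp, Jmul, Prod.mk_add_mk, Prod.mk_sub_mk, Prod.smul_mk]
  have hfst : D.sharp (x1 + y1) - (x2 + y2) * (x3 + y3) - (D.sharp x1 - x2 * x3)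
      - (D.sharp y1 - y2 * y3) = sharpBil D x1 y1 - x2 * y3 - y2 * x3 := by
    rw [sharpBil]; noncomm_ring
  rw [hfst, TA_smul' D, TA_sub' D, TA_sub' D, TA_sharpBil' D h2,
    TA_add' D, TA_add' D, TA_smul' D, TA_add' D, TA_bar' D h2, TA_bar' D h2]
  ring
end

section
/- If A ≠ F and μ ∈ A^×, then the left nucleus and right nucleus of the generalized first Tits construction J(A,μ) are both equal to F·1. -/
variable {F A : Type*} [Field F] [Ring A] [Algebra F A]

namespace JAux

variable (D : DegreeThreeAlg F A)

lemma Ndir_zero_right (x : A) : D.Ndir x 0 = 0 := by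
  have h := D.Ndir_add_right x 0 0
  simpa using h.symm

lemma TA_add (x y : A) : D.TA (x + y) = D.TA x + D.TA y := by
  simp [D.TA_def, D.Ndir_add_right]

lemma TA_smul (c : F) (x : A) : D.TA (c • x) = c * D.TA x := by
  simp [D.TA_def, D.Ndir_smul_right]

lemma TA_zero : D.TA 0 = 0 := by
  simp [D.TA_def, Ndir_zero_right]

lemma TA_sub (x y : A) : D.TA (x - y) = D.TA x - D.TA y := by
  have h : D.TA (x - y) + D.TA y = D.TA x := by
    rw [← TA_add]; norm_num
  linear_combination h

lemma TA_one (h2 : (2:F) ≠ 0) : D.TA 1 = 3 := by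
  have h := D.Ndir_expand 1 1 1
  have h1 : (1:A) + (1:F) • (1:A) = (2:F) • (1:A) := by
    rw [one_smul, two_smul]
  rw [h1, D.NA_smul, D.NA_one] at h
  have h' : (2:F) * D.Ndir 1 1 = 2 * 3 := by linear_combination -h
  have := mul_left_cancel₀ h2 h'
  rw [D.TA_def, this]


lemma TA_smul_one (h2 : (2:F) ≠ 0) (c : F) : D.TA (c • (1:A)) = 3 * c := by
  rw [TA_smul, TA_one D h2]; ring

lemma bar_two (h2 : (2:F) ≠ 0) (x : A) :
    (2:F) • bar D x = D.TA x • (1:A) - x := by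
  rw [bar, smul_smul, mul_inv_cancel₀ h2, one_smul]

lemma bar_zero : bar D 0 = 0 := by simp [bar, TA_zero]

lemma bar_smul (c : F) (x : A) : bar D (c • x) = c • bar D x := by
  rw [bar, bar, TA_smul]; module

lemma bar_add (x y : A) : bar D (x + y) = bar D x + bar D y := by
  rw [bar, bar, bar, TA_add]; module

lemma bar_sub (x y : A) : bar D (x - y) = bar D x - bar D y := by
  rw [bar, bar, bar, TA_sub]; module

lemma smul2_inj (h2 : (2:F) ≠ 0) {x y : A} (h : (2:F) • x = (2:F) • y) : x = y :=
  smul_right_injective A h2 h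

lemma bar_one (h2 : (2:F) ≠ 0) : bar D (1:A) = 1 := by
  apply smul2_inj h2
  rw [bar_two D h2, TA_one D h2]
  match_scalars; ring

lemma bar_smul_one (h2 : (2:F) ≠ 0) (c : F) : bar D (c • (1:A)) = c • (1:A) := by
  rw [bar_smul, bar_one D h2]

lemma TA_bar (h2 : (2:F) ≠ 0) (x : A) : D.TA (bar D x) = D.TA x := by
  have h2' : (2:F)⁻¹ * 2 = 1 := inv_mul_cancel₀ h2
  rw [bar, TA_smul, TA_sub, TA_smul, TA_one D h2]
  linear_combination (D.TA x) * h2'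

lemma bar_injective (h2 : (2:F) ≠ 0) {x y : A} (h : bar D x = bar D y) : x = y := by
  have hT : D.TA x = D.TA y := by
    have := congrArg D.TA h
    rwa [TA_bar D h2, TA_bar D h2] at this
  have h' := congrArg (fun z => (2:F) • z) h
  simp only [bar_two D h2, hT] at h'
  linear_combination (norm := module) -h'

lemma eq_scalar_of_bar_eq_self (h2 : (2:F) ≠ 0) (h3 : (3:F) ≠ 0) {x : A}
    (h : bar D x = x) : x = ((3:F)⁻¹ * D.TA x) • (1:A) := by
  have H := congrArg (fun z => (2:F) • z) h
  simp only [bar_two D h2] at H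
  have key : (3:F) • x = D.TA x • (1:A) := by
    linear_combination (norm := module) -H
  have := congrArg (fun z => (3:F)⁻¹ • z) key
  simp only [smul_smul, inv_mul_cancel₀ h3, one_smul] at this
  exact this

lemma eq_scalar_of_bar_bar_eq_self (h2 : (2:F) ≠ 0) (h3 : (3:F) ≠ 0) {x : A}
    (h : bar D (bar D x) = x) : x = ((3:F)⁻¹ * D.TA x) • (1:A) := by
  have Hb : (2:F) • ((2:F) • bar D (bar D x))
      = (2:F) • (D.TA x • (1:A)) - (D.TA x • (1:A) - x) := by
    rw [bar_two D h2, TA_bar D h2, smul_sub, bar_two D h2]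
  rw [h] at Hb
  have key : (3:F) • x = D.TA x • (1:A) := by
    linear_combination (norm := module) Hb
  have := congrArg (fun z => (3:F)⁻¹ • z) key
  simp only [smul_smul, inv_mul_cancel₀ h3, one_smul] at this
  exact this

lemma SA_TA_sharp (x : A) : D.SA x = D.TA (D.sharp x) := by
  have h1 := D.trace_sharp x 1
  have h2 := D.trace_product (D.sharp x) 1
  rw [h2, mul_one] at h1
  rw [D.SA_def, ← h1]

lemma SA_zero (h2 : (2:F) ≠ 0) : D.SA 0 = 0 := by
  have h := SA_TA_sharp D 0
  rw [D.sharp_def,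
    show (0:A)^2 - D.TA 0 • (0:A) + D.SA 0 • 1 = D.SA 0 • (1:A) by simp,
    TA_smul, TA_one D h2] at h
  have h' : (2:F) * D.SA 0 = 2 * 0 := by linear_combination -h
  exact mul_left_cancel₀ h2 h' 

lemma sharp_zero (h2 : (2:F) ≠ 0) : D.sharp 0 = 0 := by
  rw [D.sharp_def, SA_zero D h2]
  simp [TA_zero]

lemma sharpBil_comm (x y : A) : sharpBil D x y = sharpBil D y x := by
  rw [sharpBil, sharpBil, add_comm]
  abel

lemma cross_comm (x y : A) : cross D x y = cross D y x := by
  rw [cross, cross, sharpBil_comm]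

lemma cross_zero_right (x : A) (h2 : (2:F) ≠ 0) : cross D x 0 = 0 := by
  rw [cross, sharpBil, add_zero, sharp_zero D h2]
  simp

lemma cross_zero_left (x : A) (h2 : (2:F) ≠ 0) : cross D 0 x = 0 := by
  rw [cross_comm]; exact cross_zero_right D x h2

lemma sq_expand (x y : A) : (x + y)^2 = x^2 + (x*y + y*x) + y^2 := by
  rw [sq, sq, sq, add_mul, mul_add, mul_add]; abel

/-- expansion of the bilinear sharp -/
lemma sharpBil_formula (x y : A) :
    sharpBil D x y = x*y + y*x - D.TA x • y - D.TA y • x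
      + (D.SA (x+y) - D.SA x - D.SA y) • (1:A) := by
  rw [sharpBil, D.sharp_def, D.sharp_def, D.sharp_def, sq_expand, TA_add]
  module

lemma sBil_two (h2 : (2:F) ≠ 0) (x y : A) :
    (2:F) * (D.SA (x+y) - D.SA x - D.SA y)
      = 2 * (D.TA x * D.TA y) - D.TA (x*y) - D.TA (y*x) := by
  have hs : D.SA (x+y) - D.SA x - D.SA y = D.TA (sharpBil D x y) := by
    rw [sharpBil, TA_sub, TA_sub, SA_TA_sharp, SA_TA_sharp, SA_TA_sharp]
  have hf := congrArg D.TA (sharpBil_formula D x y)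
  rw [TA_add, TA_sub, TA_sub, TA_add, TA_smul, TA_smul, TA_smul, TA_one D h2] at hf
  rw [hs]
  rw [hf] at hs ⊢
  linear_combination (-3 : F) * hs

lemma cross_two (h2 : (2:F) ≠ 0) (x y : A) :
    (2:F) • cross D x y = sharpBil D x y := by
  rw [cross, smul_smul, mul_inv_cancel₀ h2, one_smul]

lemma cross_one_right (h2 : (2:F) ≠ 0) (x : A) : cross D x 1 = bar D x := by
  apply smul2_inj h2
  rw [cross_two D h2, bar_two D h2, sharpBil_formula]
  have hs : (2:F) * (D.SA (x+1) - D.SA x - D.SA 1)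
      = 2 * (2 * D.TA x) := by
    rw [sBil_two D h2 x 1, mul_one, one_mul, TA_one D h2]; ring
  have hs' : D.SA (x+1) - D.SA x - D.SA 1 = 2 * D.TA x :=
    mul_left_cancel₀ h2 hs
  rw [hs', mul_one, one_mul, TA_one D h2]
  match_scalars <;> ring

lemma cross_one_left (h2 : (2:F) ≠ 0) (x : A) : cross D 1 x = bar D x := by
  rw [cross_comm]; exact cross_one_right D h2 x

lemma sBil_smul_left (h2 : (2:F) ≠ 0) (c : F) (x y : A) :
    D.SA (c • x + y) - D.SA (c • x) - D.SA y
      = c * (D.SA (x+y) - D.SA x - D.SA y) := by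
  apply mul_left_cancel₀ h2
  rw [sBil_two D h2, smul_mul_assoc, mul_smul_comm, TA_smul, TA_smul, TA_smul]
  rw [show (2:F) * (c * (D.SA (x+y) - D.SA x - D.SA y))
      = c * ((2:F) * (D.SA (x+y) - D.SA x - D.SA y)) by ring, sBil_two D h2]
  ring

lemma cross_smul_left (h2 : (2:F) ≠ 0) (c : F) (x y : A) :
    cross D (c • x) y = c • cross D x y := by
  apply smul2_inj h2
  rw [smul_comm, cross_two D h2, cross_two D h2, sharpBil_formula, sharpBil_formula,
    sBil_smul_left D h2, TA_smul, smul_mul_assoc, mul_smul_comm]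
  match_scalars <;> ring

lemma cross_smul_right (h2 : (2:F) ≠ 0) (c : F) (x y : A) :
    cross D x (c • y) = c • cross D x y := by
  rw [cross_comm, cross_smul_left D h2, cross_comm]

section Jmul
variable (μ : Aˣ)

lemma Jmul_comm (x y : A × A × A) : Jmul D μ x y = Jmul D μ y x := by
  unfold Jmul
  refine Prod.ext ?_ (Prod.ext ?_ ?_) <;> simp only
  · rw [add_comm (x.1 * y.1) (y.1 * x.1)]; abel
  · rw [cross_comm D x.2.2 y.2.2]; abel
  · rw [cross_comm D x.2.1 y.2.1]; abel

lemma smul_Jone (c : F) : c • (Jone : A × A × A) = ((c • (1:A)), (0:A), (0:A)) := by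
  simp [Jone, Prod.smul_def]

lemma Jmul_scalar_left (h2 : (2:F) ≠ 0) (c : F) (y : A × A × A) :
    Jmul D μ ((c • (1:A)), (0:A), (0:A)) y = c • y := by
  have h2' : (2:F)⁻¹ * 2 = 1 := inv_mul_cancel₀ h2
  unfold Jmul
  refine Prod.ext ?_ (Prod.ext ?_ ?_) <;> simp only
  · simp only [zero_mul, mul_zero, bar_zero, add_zero, smul_mul_assoc, mul_smul_comm,
      one_mul, mul_one, Prod.smul_fst]
    match_scalars
    linear_combination c * h2'
  · simp only [bar_smul_one D h2, bar_zero, zero_mul, mul_zero, add_zero,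
      cross_zero_left (D := D) (h2 := h2), smul_mul_assoc, one_mul, Prod.smul_snd,
      Prod.smul_fst]
  · simp only [bar_smul_one D h2, bar_zero, zero_mul, mul_zero, add_zero, zero_add,
      cross_zero_left (D := D) (h2 := h2), mul_smul_comm, mul_one, Prod.smul_snd]

lemma Jmul_smul_left (h2 : (2:F) ≠ 0) (c : F) (x y : A × A × A) :
    Jmul D μ (c • x) y = c • Jmul D μ x y := by
  unfold Jmul
  refine Prod.ext ?_ (Prod.ext ?_ ?_) <;>
    simp only [Prod.smul_fst, Prod.smul_snd, smul_mul_assoc, mul_smul_comm,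
      bar_smul, cross_smul_left D h2] <;> module

lemma m_u (h2 : (2:F) ≠ 0) (a b c : A) :
    Jmul D μ (a, b, c) ((0:A), (1:A), (0:A)) = (bar D c, bar D a, (↑μ:A) * bar D b) := by
  unfold Jmul
  simp only [mul_zero, zero_mul, smul_zero, zero_add, add_zero, bar_zero, one_mul, mul_one,
    cross_zero_right (D := D) (h2 := h2), cross_one_right D h2]

lemma m_v (h2 : (2:F) ≠ 0) (a b c : A) :
    Jmul D μ (a, b, c) ((0:A), (0:A), (1:A)) = (bar D b, (↑μ⁻¹:A) * cross D c 1, bar D a) := by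
  unfold Jmul
  simp only [mul_zero, zero_mul, smul_zero, zero_add, add_zero, bar_zero, one_mul, mul_one,
    cross_zero_right (D := D) (h2 := h2)]

lemma m_e (h2 : (2:F) ≠ 0) (a b c e : A) :
    Jmul D μ (a, b, c) ((0:A), e, (0:A)) = (bar D (e * c), bar D a * e, (↑μ:A) * cross D b e) := by
  unfold Jmul
  simp only [mul_zero, zero_mul, smul_zero, zero_add, add_zero, bar_zero,
    cross_zero_right (D := D) (h2 := h2)]

lemma m_t (h2 : (2:F) ≠ 0) (a b c t : A) :
    Jmul D μ (a, b, c) ((0:A), (0:A), t) = (bar D (b * t), (↑μ⁻¹:A) * cross D c t, t * bar D a) := by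
  unfold Jmul
  simp only [mul_zero, zero_mul, smul_zero, zero_add, add_zero, bar_zero,
    cross_zero_right (D := D) (h2 := h2)]

lemma left_nucleus_iff (h2 : (2:F) ≠ 0) (h3 : (3:F) ≠ 0) (hA : ∃ a : A, ∀ c : F, a ≠ c • (1 : A))
    (x : A × A × A) :
    (∀ y z : A × A × A, Jmul D μ (Jmul D μ x y) z = Jmul D μ x (Jmul D μ y z)) ↔
      ∃ c : F, x = c • (Jone : A × A × A) := by
  obtain ⟨w, hw⟩ := hA
  have hnz : ∀ m : F, (↑μ : A) = m • 1 → m ≠ 0 := by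
    intro m hm h0
    rw [h0, zero_smul] at hm
    have h1 : (1:A) = 0 := by
      have := μ.inv_mul
      rw [hm, mul_zero] at this
      exact this.symm
    exact hw 0 (by rw [zero_smul, ← mul_one w, h1, mul_zero])
  have hall : ¬ (∀ e : A, bar D e = e) := by
    intro he
    exact hw _ (eq_scalar_of_bar_eq_self D h2 h3 (he w))
  constructor
  · intro H
    obtain ⟨a, b, c⟩ := x
    have hone : Jmul D μ (a, b, c) ((1:A), (0:A), (0:A)) = (a, b, c) := by
      have := Jmul_comm D μ (a, b, c) ((1:A), (0:A), (0:A))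
      rw [this, show ((1:A), (0:A), (0:A)) = ((1:F) • (1:A), (0:A), (0:A)) by rw [one_smul],
        Jmul_scalar_left D μ h2, one_smul]
    have huv : Jmul D μ ((0:A), (1:A), (0:A)) ((0:A), (0:A), (1:A))
        = ((1:A), (0:A), (0:A)) := by
      rw [m_v D μ h2]
      simp [bar_zero, bar_one D h2, cross_zero_left (D := D) (h2 := h2)]
    have hvu : Jmul D μ ((0:A), (0:A), (1:A)) ((0:A), (1:A), (0:A))
        = ((1:A), (0:A), (0:A)) := by
      rw [m_u D μ h2]
      simp [bar_zero, bar_one D h2]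
    -- step 1 : from H u v
    have E1 := H ((0:A), (1:A), (0:A)) ((0:A), (0:A), (1:A))
    rw [huv, hone, m_u D μ h2, m_v D μ h2, cross_one_right D h2] at E1
    simp only [Prod.mk.injEq] at E1
    obtain ⟨ea, eb, ec⟩ := E1
    -- step 2 : from H v u
    have E2 := H ((0:A), (0:A), (1:A)) ((0:A), (1:A), (0:A))
    rw [hvu, hone, m_v D μ h2, m_u D μ h2] at E2
    simp only [Prod.mk.injEq] at E2
    obtain ⟨-, eb2, -⟩ := E2
    -- scalar forms
    have ha : a = ((3:F)⁻¹ * D.TA a) • (1:A) := eq_scalar_of_bar_bar_eq_self D h2 h3 ea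
    have hc : c = ((3:F)⁻¹ * D.TA c) • (1:A) := eq_scalar_of_bar_bar_eq_self D h2 h3 ec
    have hb : b = ((3:F)⁻¹ * D.TA b) • (1:A) := eq_scalar_of_bar_bar_eq_self D h2 h3 eb2
    set α := (3:F)⁻¹ * D.TA a with hα
    set β := (3:F)⁻¹ * D.TA b with hβ
    set γ := (3:F)⁻¹ * D.TA c with hγ
    -- step 3 : from H u (0,e,0)
    have E3 : ∀ e : A,
        (β • bar D (e * ↑μ) = β • bar D (↑μ * bar D e)) ∧
        (γ • e = γ • ((↑μ⁻¹ : A) * bar D (↑μ * bar D e))) := by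
      intro e
      have huz : Jmul D μ ((0:A), (1:A), (0:A)) ((0:A), e, (0:A))
          = ((0:A), (0:A), (↑μ:A) * bar D e) := by
        rw [m_e D μ h2]
        simp [bar_zero, cross_one_left D h2]
      have E := H ((0:A), (1:A), (0:A)) ((0:A), e, (0:A))
      rw [huz, m_u D μ h2, m_e D μ h2, m_t D μ h2] at E
      rw [ha, hb, hc] at E
      simp only [bar_smul_one D h2, mul_smul_comm, smul_mul_assoc, one_mul, mul_one,
        bar_smul, cross_smul_left D h2, cross_one_left D h2, Prod.mk.injEq] at E
      obtain ⟨q1, q2, q3⟩ := E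
      exact ⟨q1, q2⟩
    -- kill β
    have hβ0 : β = 0 := by
      by_contra hβne
      have heq : ∀ e : A, e * ↑μ = (↑μ : A) * bar D e := by
        intro e
        exact bar_injective D h2 (smul_right_injective A hβne (E3 e).1)
      have hμbar : bar D (↑μ : A) = ↑μ := by
        have h := heq ↑μ
        have := congrArg (fun z => (↑μ⁻¹ : A) * z) h
        simpa [← mul_assoc, Units.inv_mul, one_mul] using this.symm
      obtain ⟨m, hm⟩ : ∃ m : F, (↑μ : A) = m • 1 :=
        ⟨_, eq_scalar_of_bar_eq_self D h2 h3 hμbar⟩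
      have hm0 := hnz m hm
      apply hall
      intro e
      have h := heq e
      simp only [hm, mul_smul_comm, smul_mul_assoc, one_mul, mul_one] at h
      exact (smul_right_injective A hm0 h).symm
    -- kill γ
    have hγ0 : γ = 0 := by
      by_contra hγne
      have heq : ∀ e : A, e = (↑μ⁻¹ : A) * bar D (↑μ * bar D e) := by
        intro e
        exact smul_right_injective A hγne (E3 e).2
      have hμbar : bar D (↑μ : A) = ↑μ := by
        have h := heq 1
        rw [bar_one D h2, mul_one] at h
        have := congrArg (fun z => (↑μ : A) * z) h
        simpa [← mul_assoc, Units.mul_inv, one_mul, mul_one] using this.symm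
      obtain ⟨m, hm⟩ : ∃ m : F, (↑μ : A) = m • 1 :=
        ⟨_, eq_scalar_of_bar_eq_self D h2 h3 hμbar⟩
      have hm0 := hnz m hm
      apply hall
      intro e
      have h := heq e
      have h' := congrArg (fun z => (↑μ : A) * z) h
      simp only [← mul_assoc, Units.mul_inv, one_mul] at h'
      simp only [hm, smul_mul_assoc, one_mul, bar_smul] at h'
      have := smul_right_injective A hm0 h'
      -- this : e = bar (bar e)
      have := eq_scalar_of_bar_bar_eq_self D h2 h3 this.symm
      rw [this, bar_smul_one D h2]
    refine ⟨α, ?_⟩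
    rw [smul_Jone, ha, hb, hc, hβ0, hγ0]
    simp
  · rintro ⟨c, rfl⟩ y z
    rw [smul_Jone, Jmul_scalar_left D μ h2, Jmul_smul_left D μ h2, Jmul_scalar_left D μ h2]

lemma right_nucleus_iff (h2 : (2:F) ≠ 0) (h3 : (3:F) ≠ 0) (hA : ∃ a : A, ∀ c : F, a ≠ c • (1 : A))
    (x : A × A × A) :
    (∀ y z : A × A × A, Jmul D μ (Jmul D μ y z) x = Jmul D μ y (Jmul D μ z x)) ↔
      ∃ c : F, x = c • (Jone : A × A × A) := by
  rw [← left_nucleus_iff D μ h2 h3 hA x]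
  constructor
  · intro H y z
    calc Jmul D μ (Jmul D μ x y) z = Jmul D μ z (Jmul D μ x y) := Jmul_comm ..
      _ = Jmul D μ z (Jmul D μ y x) := by rw [Jmul_comm D μ x y]
      _ = Jmul D μ (Jmul D μ z y) x := (H z y).symm
      _ = Jmul D μ (Jmul D μ y z) x := by rw [Jmul_comm D μ z y]
      _ = Jmul D μ x (Jmul D μ y z) := Jmul_comm ..
  · intro H y z
    calc Jmul D μ (Jmul D μ y z) x = Jmul D μ x (Jmul D μ y z) := Jmul_comm ..
      _ = Jmul D μ x (Jmul D μ z y) := by rw [Jmul_comm D μ y z]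
      _ = Jmul D μ (Jmul D μ x z) y := (H z y).symm
      _ = Jmul D μ y (Jmul D μ x z) := Jmul_comm ..
      _ = Jmul D μ y (Jmul D μ z x) := by rw [Jmul_comm D μ x z]
end Jmul

end JAux

/-- If `A ≠ F` and `μ ∈ A^×`, the left and right nuclei of `J(A,μ)` are `F·1`. -/
theorem Jnucleus_left_right (F A : Type*) [Field F] [Ring A] [Algebra F A]
    (h2 : (2 : F) ≠ 0) (h3 : (3 : F) ≠ 0) (D : DegreeThreeAlg F A) (μ : Aˣ)
    (hA : ∃ a : A, ∀ c : F, a ≠ c • (1 : A)) :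
    (∀ x : A × A × A,
      (∀ y z : A × A × A, Jmul D μ (Jmul D μ x y) z = Jmul D μ x (Jmul D μ y z)) ↔
        ∃ c : F, x = c • (Jone : A × A × A)) ∧
    (∀ x : A × A × A,
      (∀ y z : A × A × A, Jmul D μ (Jmul D μ y z) x = Jmul D μ y (Jmul D μ z x)) ↔
        ∃ c : F, x = c • (Jone : A × A × A)) := by
  exact ⟨fun x => JAux.left_nucleus_iff D μ h2 h3 hA x,
    fun x => JAux.right_nucleus_iff D μ h2 h3 hA x⟩
end

section
/- Let A be a separable associative division algebra of degree three over F and μ ∈ A^× such that 1, μ, μ² are linearly independent over F. Then the generalized cubic norm N on J(A,μ) is anisotropic, i.e., N(x) = 0 implies x = 0. -/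
variable {F A : Type*} [Field F] [Ring A] [Algebra F A]

/-- If `A` is a division algebra (so `N_A` is anisotropic) and `1, μ, μ²` are
linearly independent over `F`, then the generalized norm `N` on `J(A,μ)` is anisotropic. -/
theorem JN_anisotropic (F A : Type*) [Field F] [Ring A] [Algebra F A]
    (h2 : (2 : F) ≠ 0) (h3 : (3 : F) ≠ 0) (D : DegreeThreeAlg F A) (μ : Aˣ)
    (hdiv : ∀ a : A, a ≠ 0 →
      Function.Bijective (fun b : A => a * b) ∧ Function.Bijective (fun b : A => b * a))
    (haniso : ∀ a : A, D.NA a = 0 → a = 0)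
    (hindep : LinearIndependent F ![(1 : A), (↑μ : A), (↑μ : A) ^ 2]) :
    ∀ x : A × A × A, JN D μ x = 0 → x = 0 := by
  intro x hx
  have h1 : (1 : A) ≠ 0 := by simpa using hindep.ne_zero 0
  have hμinv : (↑μ : A) * (↑μ⁻¹ : A) = 1 := Units.mul_inv μ
  have hμne : (↑μ : A) ≠ 0 := by
    intro h
    apply h1
    rw [← hμinv, h, zero_mul]
  have hn : D.NA (↑μ : A) ≠ 0 := fun h => hμne (haniso _ h)
  have hT0 : D.TA (0 : A) = 0 := by
    rw [D.TA_def]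
    simpa using D.Ndir_smul_right 1 0 (0 : A)
  have e3 : (↑μ : A) ^ 3 * ↑μ⁻¹ = (↑μ : A) ^ 2 := by
    rw [pow_succ, mul_assoc, hμinv, mul_one]
  have e2 : (↑μ : A) ^ 2 * ↑μ⁻¹ = ↑μ := by
    rw [pow_two, mul_assoc, hμinv, mul_one]
  have hdeg := D.degree3 (↑μ : A)
  have hinv : D.NA (↑μ : A) • (↑μ⁻¹ : A)
      = (↑μ : A) ^ 2 - D.TA ↑μ • (↑μ : A) + D.SA ↑μ • (1 : A) := by
    have h := congrArg (fun a => a * (↑μ⁻¹ : A)) hdeg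
    simp only [sub_mul, add_mul, smul_mul_assoc, zero_mul, one_mul, e3, e2, hμinv] at h
    exact (sub_eq_zero.mp h).symm
  set c2 : F := D.NA x.2.2 * (D.NA (↑μ : A))⁻¹ with hc2
  have key2 : D.NA x.2.2 • (↑μ⁻¹ : A)
      = c2 • (↑μ : A) ^ 2 - (c2 * D.TA ↑μ) • (↑μ : A) + (c2 * D.SA ↑μ) • (1 : A) := by
    have h : D.NA x.2.2 • (↑μ⁻¹ : A) = c2 • (D.NA (↑μ : A) • (↑μ⁻¹ : A)) := by
      rw [smul_smul, hc2, mul_assoc, inv_mul_cancel₀ hn, mul_one]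
    rw [h, hinv]
    module
  simp only [JN] at hx
  have hall := Fintype.linearIndependent_iff.mp hindep
    ![D.NA x.1 - D.TA (x.1 * x.2.1 * x.2.2) + c2 * D.SA ↑μ,
      D.NA x.2.1 - c2 * D.TA ↑μ, c2] ?_
  swap
  · simp only [Fin.sum_univ_three, Matrix.cons_val_zero, Matrix.cons_val_one,
      Matrix.head_cons, Matrix.cons_val_two, Matrix.tail_cons]
    linear_combination (norm := module) hx - key2
  have hNx2 : D.NA x.2.2 = 0 := by
    have h := hall 2
    simp only [Matrix.cons_val_two, Matrix.tail_cons, Matrix.head_cons] at h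
    rw [hc2, mul_eq_zero] at h
    rcases h with h | h
    · exact h
    · exact absurd (inv_eq_zero.mp h) hn
  have hx2 : x.2.2 = 0 := haniso _ hNx2
  have hc2z : c2 = 0 := by rw [hc2, hNx2, zero_mul]
  have hx1 : x.2.1 = 0 := by
    apply haniso
    have h := hall 1
    simp only [Matrix.cons_val_one, Matrix.head_cons, hc2z, zero_mul, sub_zero] at h
    exact h
  have hx0 : x.1 = 0 := by
    apply haniso
    have h := hall 0
    simp only [Matrix.cons_val_zero, hc2z, zero_mul, add_zero, hx1, mul_zero, zero_mul,
      hT0, sub_zero] at h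
    exact h
  have : x = (x.1, x.2.1, x.2.2) := rfl
  rw [this, hx0, hx1, hx2]
  rfl
end
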